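/- arXiv:1802.07491 — 14 statements merged into one kernel-verified Lean document; each statement's English description precedes it below -/
import Mathlib

section
/- Let (L, c) be a commutator lattice and let x ∈ L be strictly meet-irreducible, i.e. x < x⁺ where x⁺ = ⨅ {y ∈ L | x < y}. If ¬(c x⁺ x⁺ ≤ x), then x is a prime element of L. -/
/-- In a commutator lattice, a strictly meet-irreducible element `x`
with `¬ c x⁺ x⁺ ≤ x` is prime. -/
theorem stmt_0 {L : Type*} [CompleteLattice L] (c : L → L → L)
    (hcomm : ∀ x y : L, c x y = c y x)
    (hle : ∀ x y : L, c x y ≤ x ⊓ y)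
    (hdist : ∀ (x : L) (S : Set L), c x (sSup S) = ⨆ y ∈ S, c x y)
    (x : L) (hsmi : x < sInf {y : L | x < y})
    (hne : ¬ c (sInf {y : L | x < y}) (sInf {y : L | x < y}) ≤ x) :
    x ≠ ⊤ ∧ ∀ a b : L, c a b ≤ x → a ≤ x ∨ b ≤ x := by
  have hsup : ∀ u v w : L, c u (v ⊔ w) = c u v ⊔ c u w := by
    intro u v w
    have h := hdist u {v, w}
    rw [sSup_pair] at h
    rw [h, iSup_pair]
  have hmono : ∀ u v w : L, v ≤ w → c u v ≤ c u w := by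
    intro u v w hvw
    have : c u (v ⊔ w) = c u v ⊔ c u w := hsup u v w
    rw [sup_eq_right.mpr hvw] at this
    exact this ▸ le_sup_left
  constructor
  · intro hx
    subst hx
    exact absurd hsmi (by simp)
  · intro a b hab
    by_contra h
    push_neg at h
    obtain ⟨ha, hb⟩ := h
    set p := sInf {y : L | x < y} with hp
    have hpa : p ≤ x ⊔ a := sInf_le (lt_of_le_of_ne le_sup_left (fun h =>
      ha (le_sup_right.trans h.symm.le)))
    have hpb : p ≤ x ⊔ b := sInf_le (lt_of_le_of_ne le_sup_left (fun h =>
      hb (le_sup_right.trans h.symm.le)))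
    have key : c (x ⊔ a) (x ⊔ b) ≤ x := by
      rw [hsup]
      apply sup_le
      · exact (hle (x ⊔ a) x).trans inf_le_right
      · rw [hcomm, hsup]
        apply sup_le
        · exact (hle b x).trans inf_le_right
        · rw [hcomm]; exact hab
    exact hne <| (hmono p p (x ⊔ b) hpb).trans <| (hcomm p (x ⊔ b)) ▸
      (hmono (x ⊔ b) p (x ⊔ a) hpa).trans <| (hcomm (x ⊔ b) (x ⊔ a)) ▸ key
end

section
/- Let (L, c) be a commutator lattice and let x ∈ L with x ≠ ⊤ be meet-irreducible, i.e. for all a, b ∈ L, x = a ⊓ b implies x = a or x = b. Then x is a prime element of L if and only if for every a ∈ L, c a a ≤ x implies a ≤ x. -/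
/-- In a commutator lattice, a meet-irreducible element `x ≠ ⊤` is prime
iff `c a a ≤ x` implies `a ≤ x` for all `a`. -/
theorem stmt_1 {L : Type*} [CompleteLattice L] (c : L → L → L)
    (hcomm : ∀ x y : L, c x y = c y x)
    (hle : ∀ x y : L, c x y ≤ x ⊓ y)
    (hdist : ∀ (x : L) (S : Set L), c x (sSup S) = ⨆ y ∈ S, c x y)
    (x : L) (hxt : x ≠ ⊤)
    (hmi : ∀ a b : L, x = a ⊓ b → x = a ∨ x = b) :
    (x ≠ ⊤ ∧ ∀ a b : L, c a b ≤ x → a ≤ x ∨ b ≤ x) ↔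
      (∀ a : L, c a a ≤ x → a ≤ x) := by
  have hsup : ∀ u y z : L, c u (y ⊔ z) = c u y ⊔ c u z := by
    intro u y z
    have := hdist u {y, z}
    rw [sSup_pair] at this
    simpa only [Set.mem_insert_iff, Set.mem_singleton_iff, iSup_or, iSup_sup_eq, iSup_iSup_eq_left,
      iSup_iSup_eq_right] using this
  have hmonoR : ∀ u y z : L, y ≤ z → c u y ≤ c u z := by
    intro u y z hyz
    have : c u z = c u y ⊔ c u z := by
      rw [← hsup]; rw [sup_eq_right.mpr hyz]
    rw [this]; exact le_sup_left
  have hmono : ∀ u v y z : L, u ≤ y → v ≤ z → c u v ≤ c y z := by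
    intro u v y z h1 h2
    calc c u v ≤ c u z := hmonoR u v z h2
    _ = c z u := hcomm u z
    _ ≤ c z y := hmonoR z u y h1
    _ = c y z := hcomm z y
  constructor
  · rintro ⟨-, hp⟩ a ha
    rcases hp a a ha with h | h <;> exact h
  · intro hs
    refine ⟨hxt, fun a b hab => ?_⟩
    have key : c ((a ⊔ x) ⊓ (b ⊔ x)) ((a ⊔ x) ⊓ (b ⊔ x)) ≤ x := by
      have h1 : c ((a ⊔ x) ⊓ (b ⊔ x)) ((a ⊔ x) ⊓ (b ⊔ x)) ≤ c (a ⊔ x) (b ⊔ x) :=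
        hmono _ _ _ _ inf_le_left inf_le_right
      have h2 : c (a ⊔ x) (b ⊔ x) ≤ x := by
        rw [hsup, hcomm (a ⊔ x) b, hsup]
        have hbx : c (a ⊔ x) x ≤ x := le_trans (hle _ _) inf_le_right
        have hba : c b a ≤ x := le_trans (le_of_eq (hcomm b a)) hab
        have hbx2 : c b x ≤ x := le_trans (hle _ _) inf_le_right
        exact sup_le (sup_le hba hbx2) hbx
      exact le_trans h1 h2
    have hmx : (a ⊔ x) ⊓ (b ⊔ x) ≤ x := hs _ key
    have hx : x = (a ⊔ x) ⊓ (b ⊔ x) :=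
      le_antisymm (le_inf le_sup_right le_sup_right) hmx
    rcases hmi _ _ hx with h | h
    · left; exact le_sup_left.trans h.ge
    · right; exact le_sup_left.trans h.ge
end

section
/- Let (L, c) be a commutator lattice with c ⊤ ⊤ = ⊤. Then every maximal element of L \ {⊤} (i.e. every p ≠ ⊤ such that p ≤ q implies q = p or q = ⊤) is prime. If moreover ⊤ is a compact element of L, then for every x ∈ L with x ≠ ⊤ there exists a prime element p with x ≤ p; in particular, ρ(x) = ⊤ implies x = ⊤. -/
/-!
A coatom `p` is prime: if `a, b ≰ p` then `p ⊔ a = p ⊔ b = ⊤`, so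
`⊤ = c ⊤ ⊤ = c (p ⊔ a) (p ⊔ b)`, and expanding by distributivity every term is `≤ p`
(those involving `p` because `c x y ≤ x ⊓ y`, the remaining one `c b a = c a b` by hypothesis).
When `⊤` is compact the lattice is coatomic, so every `x ≠ ⊤` lies below a coatom, hence below
a prime, and then `ρ(x) ≤ p < ⊤`.
-/

def IsCLPrime {L : Type*} [CompleteLattice L] (c : L → L → L) (p : L) : Prop :=
  p ≠ ⊤ ∧ ∀ a b : L, c a b ≤ p → a ≤ p ∨ b ≤ p

def clRadical {L : Type*} [CompleteLattice L] (c : L → L → L) (x : L) : L :=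
  sInf {p : L | IsCLPrime c p ∧ x ≤ p}

/-- The finite-subfamily form of compactness; Mathlib's `IsCompactElement`, phrased with directed
sets, is equivalent to it by `CompleteLattice.isCompactElement_iff_exists_le_sSup_of_le_sSup`. -/
def CompleteLattice.IsCompactElement {α : Type*} [CompleteLattice α] (k : α) :=
  ∀ s : Set α, k ≤ sSup s → ∃ t : Finset α, ↑t ⊆ s ∧ k ≤ t.sup id

namespace CommutatorLattice

variable {L : Type*} [CompleteLattice L] {c : L → L → L}

theorem sup_right_of_sSup_right (hdist : ∀ (x : L) (S : Set L), c x (sSup S) = ⨆ y ∈ S, c x y)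
    (x y z : L) : c x (y ⊔ z) = c x y ⊔ c x z := by
  rw [← sSup_pair, hdist, iSup_pair]

theorem isCLPrime_of_isCoatom (hcomm : ∀ x y : L, c x y = c y x) (hle : ∀ x y : L, c x y ≤ y)
    (hsup : ∀ x y z : L, c x (y ⊔ z) = c x y ⊔ c x z) (htop : c ⊤ ⊤ = ⊤) {p : L}
    (hp : IsCoatom p) : IsCLPrime c p := by
  refine ⟨hp.ne_top, fun a b hab => ?_⟩
  by_contra! h
  have hpa : p ⊔ a = ⊤ := hp.2 _ (left_lt_sup.2 h.1)
  have hpb : p ⊔ b = ⊤ := hp.2 _ (left_lt_sup.2 h.2)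
  refine hp.ne_top (top_le_iff.1 ?_)
  calc (⊤ : L) = c (p ⊔ a) (p ⊔ b) := by rw [hpa, hpb, htop]
    _ = c (p ⊔ a) p ⊔ (c b p ⊔ c b a) := by rw [hsup, hcomm _ b, hsup]
    _ ≤ p := sup_le (hle _ _) (sup_le (hle _ _) (hcomm b a ▸ hab))

theorem exists_isCLPrime_ge (hcomm : ∀ x y : L, c x y = c y x) (hle : ∀ x y : L, c x y ≤ y)
    (hsup : ∀ x y z : L, c x (y ⊔ z) = c x y ⊔ c x z) (htop : c ⊤ ⊤ = ⊤)
    (hcpt : CompleteLattice.IsCompactElement (⊤ : L)) {x : L} (hx : x ≠ ⊤) :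
    ∃ p, IsCLPrime c p ∧ x ≤ p := by
  have : IsCoatomic L := CompleteLattice.coatomic_of_top_compact
    ((CompleteLattice.isCompactElement_iff_exists_le_sSup_of_le_sSup L ⊤).2 hcpt)
  obtain ⟨p, hp, hxp⟩ := (eq_top_or_exists_le_coatom x).resolve_left hx
  exact ⟨p, isCLPrime_of_isCoatom hcomm hle hsup htop hp, hxp⟩

theorem clRadical_le {p x : L} (hp : IsCLPrime c p) (hxp : x ≤ p) : clRadical c x ≤ p :=
  sInf_le ⟨hp, hxp⟩

end CommutatorLattice

open CommutatorLattice in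
/-- If `c ⊤ ⊤ = ⊤`, maximal elements are prime; if moreover `⊤` is compact,
every `x ≠ ⊤` lies below a prime, and `ρ(x) = ⊤` implies `x = ⊤`. -/
theorem stmt_2 {L : Type*} [CompleteLattice L] (c : L → L → L)
    (hcomm : ∀ x y : L, c x y = c y x)
    (hle : ∀ x y : L, c x y ≤ x ⊓ y)
    (hdist : ∀ (x : L) (S : Set L), c x (sSup S) = ⨆ y ∈ S, c x y)
    (htop : c ⊤ ⊤ = ⊤) :
    (∀ p : L, p ≠ ⊤ → (∀ q : L, p ≤ q → q = p ∨ q = ⊤) → IsCLPrime c p) ∧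
    (CompleteLattice.IsCompactElement (⊤ : L) →
      (∀ x : L, x ≠ ⊤ → ∃ p : L, IsCLPrime c p ∧ x ≤ p) ∧
      (∀ x : L, clRadical c x = ⊤ → x = ⊤)) := by
  have hle_right : ∀ x y : L, c x y ≤ y := fun x y => (hle x y).trans inf_le_right
  have hsup := sup_right_of_sSup_right hdist
  refine ⟨fun p hp hmax => isCLPrime_of_isCoatom hcomm hle_right hsup htop
    ⟨hp, fun q hpq => (hmax q hpq.le).resolve_left hpq.ne'⟩, fun hcpt => ?_⟩
  have hprime := fun x (hx : x ≠ ⊤) => exists_isCLPrime_ge hcomm hle_right hsup htop hcpt hx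
  refine ⟨hprime, fun x hrad => ?_⟩
  by_contra hx
  obtain ⟨p, hp, hxp⟩ := hprime x hx
  exact hp.1 (top_le_iff.1 (hrad ▸ clRadical_le hp hxp))
end

section
/- Let (L, c) be a commutator lattice. Then for every x ∈ L and every family (y_i)_{i∈I} in L: ρ(x ⊓ ⨆ i, y_i) = ρ(⨆ i, (x ⊓ y_i)). (Equivalently, the quotient of L by the equivalence identifying elements with equal radicals is a frame.) -/
/-- modulo radicals, the meet distributes over arbitrary joins. -/
theorem stmt_4 {L : Type*} [CompleteLattice L] (c : L → L → L)
    (hcomm : ∀ x y : L, c x y = c y x)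
    (hle : ∀ x y : L, c x y ≤ x ⊓ y)
    (hdist : ∀ (x : L) (S : Set L), c x (sSup S) = ⨆ y ∈ S, c x y)
    (x : L) {ι : Type*} (y : ι → L) :
    clRadical c (x ⊓ ⨆ i, y i) = clRadical c (⨆ i, x ⊓ y i) := by
  apply le_antisymm
  · -- every prime above ⨆ (x ⊓ y i) is above x ⊓ ⨆ y i
    apply le_sInf
    rintro p ⟨hp, hxp⟩
    refine sInf_le ⟨hp, ?_⟩
    have hc : c x (⨆ i, y i) ≤ p := by
      have : c x (⨆ i, y i) = ⨆ z ∈ Set.range y, c x z := by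
        rw [← sSup_range (f := y), hdist]
      rw [this]
      apply iSup_le; rintro z
      apply iSup_le; rintro ⟨i, rfl⟩
      exact le_trans (le_trans (hle x (y i)) (le_iSup (fun i => x ⊓ y i) i)) hxp
    rcases hp.2 x (⨆ i, y i) hc with h | h
    · exact inf_le_left.trans h
    · exact inf_le_right.trans h
  · -- monotonicity: ⨆ (x ⊓ y i) ≤ x ⊓ ⨆ y i
    apply le_sInf
    rintro p ⟨hp, hxp⟩
    refine sInf_le ⟨hp, ?_⟩
    refine le_trans ?_ hxp
    apply iSup_le
    intro i
    exact inf_le_inf_left x (le_iSup y i)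
end

section
/- Let (L, c) be a commutator lattice in which every element is radical, i.e. ρ(x) = x for all x ∈ L. Then c x y = x ⊓ y for all x, y ∈ L, and consequently L is a frame: x ⊓ (⨆ i, y_i) = ⨆ i, (x ⊓ y_i) for every x and every family (y_i). -/
/-- if all elements are radical, then the commutator is the meet and
`L` is a frame. -/
theorem stmt_5 {L : Type*} [CompleteLattice L] (c : L → L → L)
    (hcomm : ∀ x y : L, c x y = c y x)
    (hle : ∀ x y : L, c x y ≤ x ⊓ y)
    (hdist : ∀ (x : L) (S : Set L), c x (sSup S) = ⨆ y ∈ S, c x y)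
    (hrad : ∀ x : L, clRadical c x = x) :
    (∀ x y : L, c x y = x ⊓ y) ∧
    ∀ {ι : Type*} (x : L) (y : ι → L), x ⊓ (⨆ i, y i) = ⨆ i, x ⊓ y i := by
  have key : ∀ x y : L, c x y = x ⊓ y := by
    intro x y
    refine le_antisymm (hle x y) ?_
    conv_rhs => rw [← hrad (c x y)]
    refine le_sInf fun p hp => ?_
    rcases hp.1.2 x y hp.2 with h | h
    · exact inf_le_left.trans h
    · exact inf_le_right.trans h
  refine ⟨key, fun x y => ?_⟩
  rw [← key, ← sSup_range, hdist, iSup_range]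
  exact iSup_congr fun i => key x (y i)
end

section
/- Let M be a complete lattice, N a frame, and f : M → N a surjective map preserving arbitrary suprema and arbitrary infima. Define c : M → M → M by c x y = ⨅ {z ∈ M | f z = f x ⊓ f y}. Then for all x, y ∈ M and every family (y_i)_{i∈I} in M: f (c x y) = f x ⊓ f y; c x y = c y x; c x y ≤ x ⊓ y; and c x (⨆ i, y_i) = ⨆ i, c x y_i. In particular (M, c) is a commutator lattice. -/
/-- The commutator induced by a map `f`: `c x y` is the least element of the
fiber of `f x ⊓ f y`. -/
def cfib {M N : Type*} [CompleteLattice M] [Lattice N] (f : M → N) (x y : M) : M :=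
  sInf {z : M | f z = f x ⊓ f y}

/-- a surjective map onto a frame preserving arbitrary suprema and infima
induces a commutator operation on the domain. -/
theorem stmt_7 {M N : Type*} [CompleteLattice M] [Order.Frame N]
    (f : M → N) (hsurj : Function.Surjective f)
    (hsup : ∀ S : Set M, f (sSup S) = ⨆ x ∈ S, f x)
    (hinf : ∀ S : Set M, f (sInf S) = ⨅ x ∈ S, f x) :
    (∀ x y : M, f (cfib f x y) = f x ⊓ f y) ∧
    (∀ x y : M, cfib f x y = cfib f y x) ∧
    (∀ x y : M, cfib f x y ≤ x ⊓ y) ∧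
    ∀ {ι : Type*} (x : M) (y : ι → M), cfib f x (⨆ i, y i) = ⨆ i, cfib f x (y i) := by
  -- monotonicity of f
  have hmono : Monotone f := by
    intro a b hab
    have h := hinf ({a, b} : Set M)
    rw [sInf_pair, iInf_pair] at h
    rw [inf_eq_left.2 hab] at h
    rw [h]; exact inf_le_right
  -- lower adjoint
  set g : N → M := fun w => sInf {z : M | w ≤ f z} with hg
  have hwfg : ∀ w : N, w ≤ f (g w) := by
    intro w
    rw [hg]
    simp only [hinf]
    exact le_iInf₂ fun z hz => hz
  have hgal : ∀ (w : N) (z : M), g w ≤ z ↔ w ≤ f z := by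
    intro w z
    constructor
    · intro h; exact (hwfg w).trans (hmono h)
    · intro h; exact sInf_le h
  have hfg : ∀ w : N, f (g w) = w := by
    intro w
    obtain ⟨z, hz⟩ := hsurj w
    refine le_antisymm ?_ (hwfg w)
    have h1 : g w ≤ z := sInf_le (le_of_eq hz.symm)
    calc f (g w) ≤ f z := hmono h1
      _ = w := hz
  have hc : ∀ x y : M, cfib f x y = g (f x ⊓ f y) := by
    intro x y
    refine le_antisymm (sInf_le (hfg _)) (sInf_le_sInf ?_)
    intro z hz; exact le_of_eq hz.symm
  refine ⟨fun x y => by rw [hc, hfg], fun x y => by rw [hc, hc, inf_comm], ?_, ?_⟩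
  · intro x y
    rw [hc]
    exact le_inf ((hgal _ _).2 inf_le_left) ((hgal _ _).2 inf_le_right)
  · intro ι x y
    -- g preserves suprema
    have hgsup : ∀ (w : ι → N), g (⨆ i, w i) = ⨆ i, g (w i) := by
      intro w
      refine le_antisymm ?_ (iSup_le fun i => (hgal _ _).2 ((le_iSup w i).trans (hwfg _)))
      refine (hgal _ _).2 (iSup_le fun i => ?_)
      calc w i = f (g (w i)) := (hfg _).symm
        _ ≤ f (⨆ i, g (w i)) := hmono (le_iSup (fun i => g (w i)) i)
    have hfsup : f (⨆ i, y i) = ⨆ i, f (y i) := by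
      rw [iSup, hsup, iSup_range]
    have : cfib f x (⨆ i, y i) = g (⨆ i, f x ⊓ f (y i)) := by
      rw [hc, hfsup, inf_iSup_eq]
    rw [this, hgsup]
    exact iSup_congr fun i => (hc x (y i)).symm
end

section
/- Let (L, c) be a commutator lattice with ρ(⊥) = ⊥ (i.e. ⊥ is an infimum of prime elements). Then for all a, b ∈ L: a ⊓ b = ⊥ if and only if c a b = ⊥. -/
/-- if `ρ(⊥) = ⊥`, then `a ⊓ b = ⊥` iff `c a b = ⊥`. -/
theorem stmt_8 {L : Type*} [CompleteLattice L] (c : L → L → L)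
    (hcomm : ∀ x y : L, c x y = c y x)
    (hle : ∀ x y : L, c x y ≤ x ⊓ y)
    (hdist : ∀ (x : L) (S : Set L), c x (sSup S) = ⨆ y ∈ S, c x y)
    (hbot : clRadical c ⊥ = ⊥) :
    ∀ a b : L, a ⊓ b = ⊥ ↔ c a b = ⊥ := by
  intro a b
  constructor
  · intro h
    exact le_bot_iff.mp (h ▸ hle a b)
  · intro h
    rw [← le_bot_iff, ← hbot, clRadical]
    apply le_sInf
    rintro p ⟨hp, -⟩
    rcases hp.2 a b (h ▸ bot_le) with h' | h'
    · exact inf_le_left.trans h'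
    · exact inf_le_right.trans h'
end

section
/- Let (L, c) be a commutator lattice with ρ(⊥) = ⊥. Then for every subset U ⊆ L: Ann(U) = Ann(⨆ U) (where Ann(⨆U) means Ann({⨆U})), and ⨆ Ann(U) ∈ Ann(U); consequently every annihilator in L is a principal down-set: Ann(U) = {x ∈ L | x ≤ ⨆ Ann(U)}. -/
/-- The annihilator of a subset of a lattice with a least element. -/
def latAnn {L : Type*} [SemilatticeInf L] [OrderBot L] (U : Set L) : Set L :=
  {x : L | ∀ u ∈ U, x ⊓ u = ⊥}

lemma key {L : Type*} [CompleteLattice L] (c : L → L → L)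
    (hbot : clRadical c ⊥ = ⊥) {x y : L} (h : c x y = ⊥) : x ⊓ y = ⊥ := by
  have : x ⊓ y ≤ clRadical c ⊥ := by
    apply le_sInf
    rintro p ⟨⟨-, hp⟩, -⟩
    rcases hp x y (h ▸ bot_le) with h1 | h1
    · exact le_trans inf_le_left h1
    · exact le_trans inf_le_right h1
  exact le_antisymm (hbot ▸ this) bot_le

/-- if `ρ(⊥) = ⊥`, annihilators are principal down-sets:
`Ann(U) = Ann({⨆ U})`, `⨆ Ann(U) ∈ Ann(U)` and `Ann(U) = (⨆ Ann(U)]`. -/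
theorem stmt_9 {L : Type*} [CompleteLattice L] (c : L → L → L)
    (hcomm : ∀ x y : L, c x y = c y x)
    (hle : ∀ x y : L, c x y ≤ x ⊓ y)
    (hdist : ∀ (x : L) (S : Set L), c x (sSup S) = ⨆ y ∈ S, c x y)
    (hbot : clRadical c ⊥ = ⊥) (U : Set L) :
    latAnn U = latAnn {sSup U} ∧
    sSup (latAnn U) ∈ latAnn U ∧
    latAnn U = {x : L | x ≤ sSup (latAnn U)} := by
  have czero : ∀ x y : L, x ⊓ y = ⊥ → c x y = ⊥ := fun x y h =>
    le_antisymm (h ▸ hle x y) bot_le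
  have csup : ∀ (x : L) (S : Set L), (∀ u ∈ S, x ⊓ u = ⊥) → x ⊓ sSup S = ⊥ := by
    intro x S hS
    apply key c hbot
    rw [hdist]
    exact le_antisymm (iSup₂_le fun u hu => (czero x u (hS u hu)).le) bot_le
  have h1 : latAnn U = latAnn {sSup U} := by
    ext x
    constructor
    · intro hx u hu
      rw [Set.mem_singleton_iff] at hu
      subst hu
      exact csup x U hx
    · intro hx u hu
      exact le_antisymm ((inf_le_inf_left x (le_sSup hu)).trans
        (hx (sSup U) rfl).le) bot_le
  have h2 : sSup (latAnn U) ∈ latAnn U := by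
    intro u hu
    rw [inf_comm]
    apply csup u (latAnn U)
    intro a ha
    rw [inf_comm]
    exact ha u hu
  refine ⟨h1, h2, ?_⟩
  ext x
  constructor
  · exact fun hx => le_sSup hx
  · intro hx u hu
    exact le_antisymm ((inf_le_inf_right u hx).trans (h2 u hu).le) bot_le
end

section
/- Let (L, c) be a commutator lattice, let e ∈ L be complemented, and let a ∈ L be such that c ⊤ (e ⊓ a) = e ⊓ a. Then e ⊓ a = c e a. -/
/-- if `e` is complemented and `c ⊤ (e ⊓ a) = e ⊓ a`, then `e ⊓ a = c e a`. -/
theorem stmt_10 {L : Type*} [CompleteLattice L] (c : L → L → L)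
    (hcomm : ∀ x y : L, c x y = c y x)
    (hle : ∀ x y : L, c x y ≤ x ⊓ y)
    (hdist : ∀ (x : L) (S : Set L), c x (sSup S) = ⨆ y ∈ S, c x y)
    (e a : L) (he : ∃ f : L, e ⊔ f = ⊤ ∧ e ⊓ f = ⊥)
    (ha : c ⊤ (e ⊓ a) = e ⊓ a) :
    e ⊓ a = c e a := by
  have hsup : ∀ x y z : L, c x (y ⊔ z) = c x y ⊔ c x z := by
    intro x y z
    have := hdist x {y, z}
    rwa [sSup_pair, iSup_pair] at this
  have hmono : ∀ x y z : L, y ≤ z → c x y ≤ c x z := by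
    intro x y z h
    have h2 : c x (y ⊔ z) = c x y ⊔ c x z := hsup x y z
    rw [sup_eq_right.mpr h] at h2
    rw [h2]; exact le_sup_left
  obtain ⟨f, hef, hinf⟩ := he
  have key : e ⊓ a = c (e ⊓ a) e ⊔ c (e ⊓ a) f := by
    calc e ⊓ a = c ⊤ (e ⊓ a) := ha.symm
    _ = c (e ⊓ a) ⊤ := hcomm _ _
    _ = c (e ⊓ a) (e ⊔ f) := by rw [hef]
    _ = c (e ⊓ a) e ⊔ c (e ⊓ a) f := hsup _ _ _
  have hf : c (e ⊓ a) f = ⊥ := by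
    have h1 : c (e ⊓ a) f ≤ (e ⊓ a) ⊓ f := hle _ _
    have h2 : (e ⊓ a) ⊓ f ≤ e ⊓ f := inf_le_inf_right f inf_le_left
    rw [hinf] at h2
    exact le_bot_iff.mp (h1.trans h2)
  rw [hf, sup_bot_eq] at key
  refine le_antisymm ?_ ((hle e a).trans le_rfl)
  calc e ⊓ a = c (e ⊓ a) e := key
  _ = c e (e ⊓ a) := hcomm _ _
  _ ≤ c e a := hmono e _ a inf_le_right
end

section
/- Let (L, c) be a commutator lattice satisfying c x ⊤ = x for all x ∈ L. Then: (a) for every complemented e ∈ L and every a ∈ L, e ⊓ a = c e a; (b) if e and f are complemented then e ⊔ f and e ⊓ f are complemented; (c) for every complemented e, the element n = ⨆ {a ∈ L | c e a = ⊥} = ⨆ {a ∈ L | e ⊓ a = ⊥} satisfies e ⊔ n = ⊤ and e ⊓ n = ⊥, and n is the greatest element a with e ⊓ a = ⊥ (so the set of complemented elements of L is a Boolean sublattice of L with complementation e ↦ n). -/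
/-- A complemented element of a bounded lattice. -/
def ClComplemented {L : Type*} [Lattice L] [BoundedOrder L] (e : L) : Prop :=
  ∃ f : L, e ⊔ f = ⊤ ∧ e ⊓ f = ⊥

/-- in a commutator lattice with `c x ⊤ = x`: (a) the commutator with a
complemented element is the meet; (b) complemented elements are closed under `⊔` and `⊓`;
(c) `⨆ {a | c e a = ⊥}` is a complement of `e` and the greatest element disjoint from `e`. -/
theorem stmt_11 {L : Type*} [CompleteLattice L] (c : L → L → L)
    (hcomm : ∀ x y : L, c x y = c y x)
    (hle : ∀ x y : L, c x y ≤ x ⊓ y)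
    (hdist : ∀ (x : L) (S : Set L), c x (sSup S) = ⨆ y ∈ S, c x y)
    (hc1 : ∀ x : L, c x ⊤ = x) :
    (∀ e : L, ClComplemented e → ∀ a : L, e ⊓ a = c e a) ∧
    (∀ e f : L, ClComplemented e → ClComplemented f →
      ClComplemented (e ⊔ f) ∧ ClComplemented (e ⊓ f)) ∧
    (∀ e : L, ClComplemented e →
      sSup {a : L | c e a = ⊥} = sSup {a : L | e ⊓ a = ⊥} ∧
      e ⊔ sSup {a : L | c e a = ⊥} = ⊤ ∧
      e ⊓ sSup {a : L | c e a = ⊥} = ⊥ ∧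
      IsGreatest {a : L | e ⊓ a = ⊥} (sSup {a : L | c e a = ⊥})) := by
  -- distributivity over binary joins
  have hsup : ∀ x y z : L, c x (y ⊔ z) = c x y ⊔ c x z := by
    intro x y z
    rw [← sSup_pair, hdist]
    rw [iSup_pair]
  -- monotonicity in the second argument
  have hmono : ∀ (x : L) {y z : L}, y ≤ z → c x y ≤ c x z := by
    intro x y z hyz
    have : c x z = c x y ⊔ c x z := by
      rw [← hsup, sup_eq_right.mpr hyz]
    rw [this]; exact le_sup_left
  -- part (a)
  have parta : ∀ e : L, ClComplemented e → ∀ a : L, e ⊓ a = c e a := by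
    intro e ⟨f, hef, hefb⟩ a
    refine le_antisymm ?_ (hle e a)
    set m := e ⊓ a with hm
    have h1 : m = c m e ⊔ c m f := by
      conv_lhs => rw [← hc1 m, ← hef, hsup]
    have h2 : c m f ≤ ⊥ := by
      calc c m f ≤ m ⊓ f := hle m f
        _ ≤ e ⊓ f := inf_le_inf_right f inf_le_left
        _ = ⊥ := hefb
    have h3 : c m e ≤ c e a := by
      rw [hcomm m e]
      exact hmono e inf_le_right
    calc m = c m e ⊔ c m f := h1
      _ ≤ c e a ⊔ ⊥ := sup_le_sup h3 h2
      _ = c e a := sup_bot_eq _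
  refine ⟨parta, ?_, ?_⟩
  · -- part (b)
    intro e f he hf
    obtain ⟨e', hee', hee'b⟩ := he
    obtain ⟨f', hff', hff'b⟩ := hf
    have he'c : ClComplemented e' := ⟨e, by rwa [sup_comm], by rwa [inf_comm]⟩
    constructor
    · -- e ⊔ f complemented, with complement e' ⊓ f'
      refine ⟨e' ⊓ f', ?_, ?_⟩
      · -- join is ⊤
        have h1 : e' ≤ f ⊔ e' ⊓ f' := by
          calc e' = c e' ⊤ := (hc1 e').symm
            _ = c e' f ⊔ c e' f' := by rw [← hff', hsup]
            _ ≤ f ⊔ e' ⊓ f' := by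
                refine sup_le_sup ?_ ?_
                · exact (hle e' f).trans inf_le_right
                · exact hle e' f'
        refine top_le_iff.mp ?_
        calc ⊤ = e ⊔ e' := hee'.symm
          _ ≤ e ⊔ (f ⊔ e' ⊓ f') := sup_le_sup_left h1 e
          _ = e ⊔ f ⊔ e' ⊓ f' := by rw [sup_assoc]
      · -- meet is ⊥
        set m := (e ⊔ f) ⊓ (e' ⊓ f') with hm
        have hm1 : m ≤ f := by
          have : m ≤ e' ⊓ (e ⊔ f) :=
            le_inf (inf_le_right.trans inf_le_left) inf_le_left
          have h2 : e' ⊓ (e ⊔ f) ≤ f := by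
            rw [parta e' he'c (e ⊔ f), hsup]
            refine sup_le ?_ ?_
            · rw [hcomm]
              calc c e e' ≤ e ⊓ e' := hle e e'
                _ = ⊥ := hee'b
                _ ≤ f := bot_le
            · exact (hle e' f).trans inf_le_right
          exact this.trans h2
        have hm2 : m ≤ f' := inf_le_right.trans inf_le_right
        refine le_bot_iff.mp ?_
        calc m ≤ f ⊓ f' := le_inf hm1 hm2
          _ = ⊥ := hff'b
    · -- e ⊓ f complemented, with complement e' ⊔ f'
      refine ⟨e' ⊔ f', ?_, ?_⟩
      · have h1 : e ≤ e ⊓ f ⊔ f' := by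
          calc e = c e ⊤ := (hc1 e).symm
            _ = c e f ⊔ c e f' := by rw [← hff', hsup]
            _ ≤ e ⊓ f ⊔ f' := sup_le_sup (hle e f) ((hle e f').trans inf_le_right)
        refine top_le_iff.mp ?_
        calc ⊤ = e ⊔ e' := hee'.symm
          _ ≤ (e ⊓ f ⊔ f') ⊔ e' := sup_le_sup_right h1 e'
          _ = e ⊓ f ⊔ (e' ⊔ f') := by
              rw [sup_assoc, sup_comm f' e']
      · set m := e ⊓ f ⊓ (e' ⊔ f') with hm
        have hm1 : m ≤ e ⊓ f' := by
          have h2 : m ≤ e ⊓ (e' ⊔ f') :=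
            le_inf (inf_le_left.trans inf_le_left) inf_le_right
          have h3 : e ⊓ (e' ⊔ f') ≤ e ⊓ f' := by
            rw [parta e ⟨e', hee', hee'b⟩ (e' ⊔ f'), hsup]
            refine sup_le ?_ ?_
            · calc c e e' ≤ e ⊓ e' := hle e e'
                _ = ⊥ := hee'b
                _ ≤ e ⊓ f' := bot_le
            · exact hle e f'
          exact h2.trans h3
        refine le_bot_iff.mp ?_
        calc m ≤ f ⊓ f' := le_inf (inf_le_left.trans inf_le_right) (hm1.trans inf_le_right)
          _ = ⊥ := hff'b
  · -- part (c)
    intro e he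
    obtain ⟨f, hef, hefb⟩ := he
    have hset : {a : L | c e a = ⊥} = {a : L | e ⊓ a = ⊥} := by
      ext a
      simp only [Set.mem_setOf_eq, parta e ⟨f, hef, hefb⟩ a]
    have hmeet : e ⊓ sSup {a : L | c e a = ⊥} = ⊥ := by
      rw [parta e ⟨f, hef, hefb⟩, hdist]
      simp only [Set.mem_setOf_eq]
      refine le_bot_iff.mp (iSup_le fun a => iSup_le fun ha => ha.le)
    have hfmem : f ∈ {a : L | c e a = ⊥} := by
      simp only [Set.mem_setOf_eq]
      exact le_bot_iff.mp ((hle e f).trans hefb.le)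
    have hjoin : e ⊔ sSup {a : L | c e a = ⊥} = ⊤ := by
      refine top_le_iff.mp ?_
      calc ⊤ = e ⊔ f := hef.symm
        _ ≤ e ⊔ sSup {a : L | c e a = ⊥} := sup_le_sup_left (le_sSup hfmem) e
    refine ⟨by rw [hset], hjoin, hmeet, ?_, ?_⟩
    · exact hmeet
    · intro a ha
      rw [hset]
      exact le_sSup ha
end

section
/- Let (L, c) be a commutator lattice such that: ρ(⊥) = ⊥, c x ⊤ = x for all x ∈ L, and every x ≠ ⊤ lies below some prime element (equivalently, ρ(x) = ⊤ implies x = ⊤). Then L is Stone if and only if L is strongly Stone; that is, (for every a ∈ L there is a complemented e with Ann(a) = {x | x ≤ e}) if and only if (for every subset U ⊆ L there is a complemented e with Ann(U) = {x | x ≤ e}). -/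
/-- under `ρ(⊥) = ⊥`, `c x ⊤ = x` and existence of primes above proper
elements, `L` is Stone iff `L` is strongly Stone. -/
theorem stmt_12 {L : Type*} [CompleteLattice L] (c : L → L → L)
    (hcomm : ∀ x y : L, c x y = c y x)
    (hle : ∀ x y : L, c x y ≤ x ⊓ y)
    (hdist : ∀ (x : L) (S : Set L), c x (sSup S) = ⨆ y ∈ S, c x y)
    (hbot : clRadical c ⊥ = ⊥)
    (hc1 : ∀ x : L, c x ⊤ = x)
    (hprime : ∀ x : L, x ≠ ⊤ → ∃ p : L, IsCLPrime c p ∧ x ≤ p) :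
    (∀ a : L, ∃ e : L, ClComplemented e ∧ latAnn {a} = {x : L | x ≤ e}) ↔
    (∀ U : Set L, ∃ e : L, ClComplemented e ∧ latAnn U = {x : L | x ≤ e}) := by
  -- monotonicity of c in the second argument
  have hmono2 : ∀ x y y' : L, y ≤ y' → c x y ≤ c x y' := by
    intro x y y' h
    have h1 : c x (sSup {y, y'}) = ⨆ z ∈ ({y, y'} : Set L), c x z := hdist x {y, y'}
    have h2 : sSup ({y, y'} : Set L) = y' := by
      rw [sSup_pair, sup_eq_right.mpr h]
    rw [h2] at h1
    rw [h1]
    exact le_biSup (c x) (by simp : y ∈ ({y, y'} : Set L))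
  have hmono1 : ∀ x x' y : L, x ≤ x' → c x y ≤ c x' y := by
    intro x x' y h
    rw [hcomm x y, hcomm x' y]; exact hmono2 y x x' h
  constructor
  · intro hStone U
    obtain ⟨e, he, hAnn⟩ := hStone (sSup U)
    refine ⟨e, he, ?_⟩
    have key : latAnn U = latAnn {sSup U} := by
      ext x
      constructor
      · intro hx
        intro u hu
        simp only [Set.mem_singleton_iff] at hu
        subst hu
        -- show x ⊓ sSup U = ⊥
        set m := x ⊓ sSup U with hm
        have hcmm : c m m = ⊥ := by
          have h1 : c m m ≤ c x (sSup U) :=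
            le_trans (hmono1 m x m inf_le_left) (hmono2 x m (sSup U) inf_le_right)
          have h2 : c x (sSup U) = ⊥ := by
            rw [hdist]
            apply le_bot_iff.mp
            apply iSup_le; intro u; apply iSup_le; intro hu
            have := le_trans (hle x u) (le_of_eq (hx u hu))
            exact this
          rw [h2] at h1
          exact le_bot_iff.mp h1
        have : m ≤ clRadical c ⊥ := by
          apply le_sInf
          rintro p ⟨hp, -⟩
          rcases hp.2 m m (hcmm ▸ bot_le) with h | h <;> exact h
        rw [hbot] at this
        exact le_bot_iff.mp this
      · intro hx u hu
        have h := hx (sSup U) rfl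
        exact le_bot_iff.mp (le_trans (inf_le_inf_left x (le_sSup hu)) (le_of_eq h))
    rw [key, hAnn]
  · intro hS a
    exact hS {a}
end

section
/- Let (L, c) be a commutator lattice such that: ρ(⊥) = ⊥, c x ⊤ = x for all x ∈ L, and every x ≠ ⊤ lies below some prime element. Then the following are equivalent: (a) for every a ∈ L, ⨆ Ann(a) is complemented (L is Stone); (b) for every subset U ⊆ L there is a complemented e with Ann(U) = {x | x ≤ e} (L is strongly Stone); (c) for all a, b ∈ L, ⨆ Ann(a ⊓ b) = (⨆ Ann(a)) ⊔ (⨆ Ann(b)); (d) for every subset U ⊆ L, (⨆ Ann(U)) ⊔ (⨆ Ann(Ann(U))) = ⊤. -/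
section Aux
variable {L : Type*} [CompleteLattice L] {c : L → L → L}

lemma aux_mb (hle : ∀ x y : L, c x y ≤ x ⊓ y) (hbot : clRadical c ⊥ = ⊥) {x y : L} :
    x ⊓ y = ⊥ ↔ c x y = ⊥ := by
  constructor
  · intro h; exact le_bot_iff.mp (h ▸ hle x y)
  · intro h
    rw [← le_bot_iff, ← hbot]
    apply le_sInf
    rintro p ⟨hp, -⟩
    rcases hp.2 x y (h ▸ bot_le) with h' | h'
    · exact inf_le_left.trans h'
    · exact inf_le_right.trans h'

lemma aux_csup2 (hdist : ∀ (x : L) (S : Set L), c x (sSup S) = ⨆ y ∈ S, c x y) (x y z : L) :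
    c x (y ⊔ z) = c x y ⊔ c x z := by
  rw [← sSup_pair, hdist, iSup_pair]

lemma aux_msb (hle : ∀ x y : L, c x y ≤ x ⊓ y)
    (hdist : ∀ (x : L) (S : Set L), c x (sSup S) = ⨆ y ∈ S, c x y)
    (hbot : clRadical c ⊥ = ⊥) (x : L) (S : Set L) :
    x ⊓ sSup S = ⊥ ↔ ∀ y ∈ S, x ⊓ y = ⊥ := by
  rw [aux_mb hle hbot, hdist]
  constructor
  · intro h y hy
    rw [aux_mb hle hbot]
    exact le_bot_iff.mp ((le_biSup _ hy).trans h.le)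
  · intro h
    rw [← le_bot_iff]
    exact iSup₂_le fun y hy => le_of_eq ((aux_mb hle hbot).mp (h y hy))

variable (hle : ∀ x y : L, c x y ≤ x ⊓ y)
variable (hdist : ∀ (x : L) (S : Set L), c x (sSup S) = ⨆ y ∈ S, c x y)
variable (hbot : clRadical c ⊥ = ⊥)

lemma aux_mem_ann {x a : L} : x ∈ latAnn {a} ↔ x ⊓ a = ⊥ := by simp [latAnn]

include hle hdist hbot in
lemma aux_star_inf (a : L) : sSup (latAnn {a}) ⊓ a = ⊥ := by
  rw [inf_comm, aux_msb hle hdist hbot]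
  intro y hy
  rw [inf_comm]
  exact aux_mem_ann.mp hy

include hle hdist hbot in
lemma aux_le_star {x a : L} : x ⊓ a = ⊥ ↔ x ≤ sSup (latAnn {a}) := by
  constructor
  · intro h; exact le_sSup (aux_mem_ann.mpr h)
  · intro h
    exact le_bot_iff.mp ((inf_le_inf_right a h).trans (aux_star_inf hle hdist hbot a).le)

include hle hdist hbot in
lemma aux_ann_eq (U : Set L) : latAnn U = latAnn {sSup U} := by
  ext x
  simp only [latAnn, Set.mem_setOf_eq, Set.mem_singleton_iff, forall_eq]
  exact (aux_msb hle hdist hbot x U).symm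

lemma aux_star_bot : sSup (latAnn ({⊥} : Set L)) = ⊤ :=
  le_antisymm le_top (le_sSup (by simp [latAnn]))

/-- Abstract hard direction: Stone identity from `s x ⊔ s (s x) = ⊤`. -/
lemma aux_hard (hle : ∀ x y : L, c x y ≤ x ⊓ y)
    (hc2 : ∀ x y z : L, c x (y ⊔ z) = c x y ⊔ c x z) (hc1 : ∀ x : L, c x ⊤ = x)
    (s : L → L) (hP : ∀ x y : L, x ⊓ y = ⊥ ↔ x ≤ s y)
    (hT : ∀ x : L, s x ⊔ s (s x) = ⊤) (a b : L) : s (a ⊓ b) ≤ s a ⊔ s b := by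
  have hP2 : ∀ x : L, s x ⊓ x = ⊥ := fun x => (hP _ _).mpr le_rfl
  have h1 : s (a ⊓ b) ⊓ b ⊓ a = ⊥ := by rw [inf_assoc, inf_comm b a]; exact hP2 _
  have h2 : s (a ⊓ b) ⊓ b ≤ s a := (hP _ _).mp h1
  have h3 : s (a ⊓ b) ⊓ s (s a) ⊓ b = ⊥ := le_bot_iff.mp <| by
    calc s (a ⊓ b) ⊓ s (s a) ⊓ b = s (a ⊓ b) ⊓ b ⊓ s (s a) := inf_right_comm _ _ _
    _ ≤ s a ⊓ s (s a) := inf_le_inf_right _ h2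
    _ ≤ ⊥ := by rw [inf_comm]; exact (hP2 _).le
  have h4 : s (a ⊓ b) ⊓ s (s a) ≤ s b := (hP _ _).mp h3
  have h5 : s (a ⊓ b) ⊓ s (s a) ⊓ s (s b) = ⊥ := le_bot_iff.mp <| by
    calc s (a ⊓ b) ⊓ s (s a) ⊓ s (s b) ≤ s b ⊓ s (s b) := inf_le_inf_right _ h4
    _ ≤ ⊥ := by rw [inf_comm]; exact (hP2 _).le
  have e2 : c (s (a ⊓ b)) (s (s a)) ≤ s b := by
    have heq : c (s (a ⊓ b)) (s (s a)) =
        c (c (s (a ⊓ b)) (s (s a))) (s b) ⊔ c (c (s (a ⊓ b)) (s (s a))) (s (s b)) := by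
      conv_lhs => rw [← hc1 (c (s (a ⊓ b)) (s (s a)))]
      rw [← hT b, hc2]
    rw [heq]
    apply sup_le
    · exact (hle _ _).trans inf_le_right
    · refine (hle _ _).trans <| le_trans (inf_le_inf_right _ (hle _ _)) ?_
      exact h5.le.trans bot_le
  calc s (a ⊓ b) = c (s (a ⊓ b)) (s a ⊔ s (s a)) := by rw [hT a, hc1]
  _ = c (s (a ⊓ b)) (s a) ⊔ c (s (a ⊓ b)) (s (s a)) := hc2 _ _ _
  _ ≤ s a ⊔ s b := sup_le_sup ((hle _ _).trans inf_le_right) e2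

end Aux

/-- under `ρ(⊥) = ⊥`, `c x ⊤ = x` and existence of primes above proper
elements, the Stone conditions (a), (b), (c), (d) are equivalent. -/
theorem stmt_13 {L : Type*} [CompleteLattice L] (c : L → L → L)
    (hcomm : ∀ x y : L, c x y = c y x)
    (hle : ∀ x y : L, c x y ≤ x ⊓ y)
    (hdist : ∀ (x : L) (S : Set L), c x (sSup S) = ⨆ y ∈ S, c x y)
    (hbot : clRadical c ⊥ = ⊥)
    (hc1 : ∀ x : L, c x ⊤ = x)
    (hprime : ∀ x : L, x ≠ ⊤ → ∃ p : L, IsCLPrime c p ∧ x ≤ p) :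
    ((∀ a : L, ClComplemented (sSup (latAnn {a}))) ↔
      (∀ U : Set L, ∃ e : L, ClComplemented e ∧ latAnn U = {x : L | x ≤ e})) ∧
    ((∀ U : Set L, ∃ e : L, ClComplemented e ∧ latAnn U = {x : L | x ≤ e}) ↔
      (∀ a b : L, sSup (latAnn {a ⊓ b}) = sSup (latAnn {a}) ⊔ sSup (latAnn {b}))) ∧
    ((∀ a b : L, sSup (latAnn {a ⊓ b}) = sSup (latAnn {a}) ⊔ sSup (latAnn {b})) ↔
      (∀ U : Set L, sSup (latAnn U) ⊔ sSup (latAnn (latAnn U)) = ⊤)) := by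
  have lestar : ∀ {x a : L}, x ⊓ a = ⊥ ↔ x ≤ sSup (latAnn {a}) :=
    fun {x a} => aux_le_star hle hdist hbot
  have sinf : ∀ a : L, sSup (latAnn {a}) ⊓ a = ⊥ := aux_star_inf hle hdist hbot
  have anneq : ∀ U : Set L, latAnn U = latAnn {sSup U} := aux_ann_eq hle hdist hbot
  -- (a) → (d)-type identity for single elements
  have starstar_top : (∀ a : L, ClComplemented (sSup (latAnn {a}))) →
      ∀ a : L, sSup (latAnn {a}) ⊔ sSup (latAnn {sSup (latAnn {a})}) = ⊤ := by
    intro hA a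
    obtain ⟨f, hs, hi⟩ := hA a
    have hf : f ≤ sSup (latAnn {sSup (latAnn {a})}) := lestar.mp (by rw [inf_comm]; exact hi)
    exact le_antisymm le_top (by rw [← hs]; exact sup_le_sup_left hf _)
  have hAB : (∀ a : L, ClComplemented (sSup (latAnn {a}))) →
      ∀ U : Set L, ∃ e : L, ClComplemented e ∧ latAnn U = {x : L | x ≤ e} := by
    intro hA U
    refine ⟨sSup (latAnn {sSup U}), hA (sSup U), ?_⟩
    rw [anneq U]
    ext x
    simp only [Set.mem_setOf_eq]
    exact aux_mem_ann.trans lestar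
  have hBA : (∀ U : Set L, ∃ e : L, ClComplemented e ∧ latAnn U = {x : L | x ≤ e}) →
      ∀ a : L, ClComplemented (sSup (latAnn {a})) := by
    intro hB a
    obtain ⟨e, he, hEq⟩ := hB {a}
    have : sSup (latAnn {a}) = e := by
      rw [hEq]; exact csSup_Iic
    rw [this]; exact he
  have hAD : (∀ a : L, ClComplemented (sSup (latAnn {a}))) →
      ∀ U : Set L, sSup (latAnn U) ⊔ sSup (latAnn (latAnn U)) = ⊤ := by
    intro hA U
    rw [anneq U, anneq (latAnn {sSup U})]
    exact starstar_top hA (sSup U)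
  have hDA : (∀ U : Set L, sSup (latAnn U) ⊔ sSup (latAnn (latAnn U)) = ⊤) →
      ∀ a : L, ClComplemented (sSup (latAnn {a})) := by
    intro hD a
    refine ⟨sSup (latAnn {sSup (latAnn {a})}), ?_, ?_⟩
    · have := hD {a}
      rwa [anneq (latAnn {a})] at this
    · rw [inf_comm]; exact sinf _
  have hCD : (∀ a b : L, sSup (latAnn {a ⊓ b}) = sSup (latAnn {a}) ⊔ sSup (latAnn {b})) →
      ∀ U : Set L, sSup (latAnn U) ⊔ sSup (latAnn (latAnn U)) = ⊤ := by
    intro hC U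
    rw [anneq U, anneq (latAnn {sSup U})]
    have h := hC (sSup U) (sSup (latAnn {sSup U}))
    rw [show sSup U ⊓ sSup (latAnn {sSup U}) = ⊥ by rw [inf_comm]; exact sinf _] at h
    rw [← h]
    exact aux_star_bot
  have hDC : (∀ U : Set L, sSup (latAnn U) ⊔ sSup (latAnn (latAnn U)) = ⊤) →
      ∀ a b : L, sSup (latAnn {a ⊓ b}) = sSup (latAnn {a}) ⊔ sSup (latAnn {b}) := by
    intro hD a b
    have hT : ∀ x : L, sSup (latAnn {x}) ⊔ sSup (latAnn {sSup (latAnn {x})}) = ⊤ := by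
      intro x
      have := hD {x}
      rwa [anneq (latAnn {x})] at this
    refine le_antisymm ?_ (sup_le ?_ ?_)
    · exact aux_hard hle (aux_csup2 hdist) hc1 (fun x => sSup (latAnn {x}))
        (fun x y => lestar) hT a b
    · exact lestar.mp (le_bot_iff.mp ((inf_le_inf_left _ inf_le_left).trans (sinf a).le))
    · exact lestar.mp (le_bot_iff.mp ((inf_le_inf_left _ inf_le_right).trans (sinf b).le))
  refine ⟨⟨hAB, hBA⟩, ⟨fun hB => hDC (hAD (hBA hB)) , fun hC => hAB (hDA (hCD hC))⟩,
    ⟨hCD, hDC⟩⟩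
end

section
/- Let M be a complete lattice, N a frame, and f : M → N a surjective map preserving binary infima and arbitrary suprema, such that f x = ⊥ implies x = ⊥. Then for every subset U ⊆ M: Ann_M(U) = Ann_M({⨆ U}), and ⨆ Ann_M(U) ∈ Ann_M(U), so that Ann_M(U) = {x ∈ M | x ≤ ⨆ Ann_M(U)} is a principal down-set. -/
/-- for a surjective map onto a frame preserving binary infima and arbitrary
suprema with trivial kernel class of `⊥`, annihilators are principal down-sets. -/
theorem stmt_15 {M N : Type*} [CompleteLattice M] [Order.Frame N]
    (f : M → N) (hsurj : Function.Surjective f)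
    (hinf : ∀ x y : M, f (x ⊓ y) = f x ⊓ f y)
    (hsup : ∀ S : Set M, f (sSup S) = ⨆ x ∈ S, f x)
    (hker : ∀ x : M, f x = ⊥ → x = ⊥) (U : Set M) :
    latAnn U = latAnn {sSup U} ∧
    sSup (latAnn U) ∈ latAnn U ∧
    latAnn U = {x : M | x ≤ sSup (latAnn U)} := by
  have hbot : f ⊥ = ⊥ := by
    have := hsup ∅
    simpa using this
  have key : ∀ x : M, ∀ V : Set M, (∀ u ∈ V, x ⊓ u = ⊥) → x ⊓ sSup V = ⊥ := by
    intro x V hV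
    apply hker
    rw [hinf, hsup]
    rw [inf_iSup_eq]
    apply iSup_eq_bot.2
    intro u
    rw [inf_iSup_eq]
    apply iSup_eq_bot.2
    intro hu
    rw [← hinf, hV u hu, hbot]
  have h1 : latAnn U = latAnn {sSup U} := by
    ext x
    constructor
    · intro hx u hu
      rw [Set.mem_singleton_iff] at hu
      subst hu
      exact key x U hx
    · intro hx u hu
      have h := hx (sSup U) rfl
      have : x ⊓ u ≤ ⊥ := by
        calc x ⊓ u ≤ x ⊓ sSup U := inf_le_inf_left x (le_sSup hu)
        _ = ⊥ := h
      exact le_bot_iff.1 this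
  have h2 : sSup (latAnn U) ∈ latAnn U := by
    intro u hu
    rw [inf_comm]
    exact key u (latAnn U) (fun x hx => by rw [inf_comm]; exact hx u hu)
  refine ⟨h1, h2, ?_⟩
  ext x
  constructor
  · intro hx
    exact le_sSup hx
  · intro hx u hu
    have : x ⊓ u ≤ ⊥ := by
      calc x ⊓ u ≤ sSup (latAnn U) ⊓ u := inf_le_inf_right u hx
      _ = ⊥ := h2 u hu
    exact le_bot_iff.1 this
end

section
/- Let R be a reduced (semiprime) commutative unitary ring. The following are equivalent: (i) R is strongly Baer, i.e. for every subset U ⊆ R there is an idempotent e ∈ R with Ann(U) = eR; (ii) for every ideal I of R there is an idempotent e ∈ R with Ann(I) = eR; (iii) for every subset U ⊆ R, Ann(U) + Ann(Ann(U)) = R (the sum of the two annihilator ideals is the whole ring). -/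
/-- The annihilator ideal of a subset of a commutative ring. -/
def annSet {R : Type*} [CommRing R] (U : Set R) : Ideal R where
  carrier := {x : R | ∀ u ∈ U, x * u = 0}
  add_mem' := by
    intro a b ha hb u hu
    rw [add_mul, ha u hu, hb u hu, add_zero]
  zero_mem' := by
    intro u hu
    rw [zero_mul]
  smul_mem' := by
    intro r x hx u hu
    rw [smul_eq_mul, mul_assoc, hx u hu, mul_zero]

lemma mem_annSet {R : Type*} [CommRing R] {U : Set R} {x : R} :
    x ∈ annSet U ↔ ∀ u ∈ U, x * u = 0 := Iff.rfl

lemma annSet_span {R : Type*} [CommRing R] (U : Set R) :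
    annSet ((Ideal.span U : Ideal R) : Set R) = annSet U := by
  ext x
  simp only [mem_annSet]
  constructor
  · intro hx u hu
    exact hx u (Ideal.subset_span hu)
  · intro hx u hu
    refine Submodule.span_induction (fun y hy => hx y hy) (by rw [mul_zero])
      (fun a b _ _ ha hb => by rw [mul_add, ha, hb, add_zero])
      (fun r a _ ha => by rw [smul_eq_mul, ← mul_assoc, mul_comm x r, mul_assoc, ha, mul_zero]) hu

/-- in a reduced commutative ring the following are equivalent:
(i) `R` is strongly Baer; (ii) the annihilator of each ideal is generated by an
idempotent; (iii) `Ann(U) + Ann(Ann(U)) = R` for every subset `U`. -/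
theorem stmt_19 {R : Type*} [CommRing R] [IsReduced R] :
    ((∀ U : Set R, ∃ e : R, e * e = e ∧ annSet U = Ideal.span {e}) ↔
      (∀ I : Ideal R, ∃ e : R, e * e = e ∧ annSet (I : Set R) = Ideal.span {e})) ∧
    ((∀ I : Ideal R, ∃ e : R, e * e = e ∧ annSet (I : Set R) = Ideal.span {e}) ↔
      (∀ U : Set R, annSet U ⊔ annSet ((annSet U : Ideal R) : Set R) = ⊤)) := by
  constructor
  · constructor
    · intro h I
      exact h (I : Set R)
    · intro h U
      obtain ⟨e, he, hspan⟩ := h (Ideal.span U)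
      exact ⟨e, he, by rw [← annSet_span U, hspan]⟩
  · constructor
    · intro h U
      obtain ⟨e, he, hspan⟩ := h (Ideal.span U)
      rw [annSet_span] at hspan
      rw [Ideal.eq_top_iff_one]
      have h1 : e ∈ annSet U := by rw [hspan]; exact Ideal.subset_span rfl
      have h2 : (1 - e) ∈ annSet ((annSet U : Ideal R) : Set R) := by
        intro u hu
        rw [hspan] at hu
        obtain ⟨c, rfl⟩ := Ideal.mem_span_singleton.mp hu
        have : (1 - e) * (e * c) = (e - e * e) * c := by ring
        rw [this, he, sub_self, zero_mul]
      have : (1 : R) = e + (1 - e) := by ring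
      rw [this]
      exact Submodule.add_mem_sup h1 h2
    · intro h I
      have hU := h (I : Set R)
      rw [Ideal.eq_top_iff_one] at hU
      obtain ⟨a, ha, b, hb, hab⟩ := Submodule.mem_sup.mp hU
      refine ⟨a, ?_, ?_⟩
      · have hab0 : a * b = 0 := mul_comm a b ▸ hb a ha
        have h2 := congrArg (a * ·) hab
        simp only [mul_add, mul_one, hab0, add_zero] at h2
        exact h2
      · apply le_antisymm
        · intro x hx
          rw [Ideal.mem_span_singleton]
          have hxb : x * b = 0 := mul_comm x b ▸ hb x hx
          refine ⟨x, ?_⟩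
          have := congrArg (x * ·) hab
          simp only [mul_one, mul_add, hxb, add_zero] at this
          rw [mul_comm a x]
          exact this.symm
        · rw [Ideal.span_le, Set.singleton_subset_iff]
          exact ha
end
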